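/- arXiv:2005.02552 — 2 statements merged into one kernel-verified Lean document; each statement's English description precedes it below -/
import Mathlib

section
/- Let NN be a K-way, L-layer fully-connected network (L ≥ 2) with weight matrices w_1,…,w_L, bias vectors b_1,…,b_L, componentwise activation f : ℝ → ℝ Lipschitz with constant C ≥ 0, logits θ(x) = w_L h_{L−1}(x) + b_L, and softmax output NN(x)_k = exp(θ_k(x)) / Σ_{p=1}^K exp(θ_p(x)). Let ξ be a perturbation vector and set η = C^{L−1} · max_{k=1,…,K} (|w_L|·|w_{L−1}|⋯|w_1|·|ξ|)_k, where |·| denotes entrywise absolute value. Then for every k, |NN(x)_k − NN(x+ξ)_k| ≤ exp(θ_k(x)) · (e^η − e^{−η}) / Σ_{p=1}^K exp(θ_p(x+ξ)). -/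
/-!
A layer `v ↦ f ∘ (w v + b)` turns an entrywise displacement bound `u` of its input into the
bound `C |w| u` of its output, so `h_{L-1}` moves by at most `C^{L-1} |w_{L-1}|⋯|w_1||ξ|` and
every logit by at most `η`. Then each exponential `exp θ_p`, and hence the normalizing sum,
changes by a factor in `[e^{-η}, e^η]`, so both `NN(x)_k` and `NN(x+ξ)_k` lie in the interval
`[e^{-η}, e^η] · exp(θ_k(x)) / ∑_p exp(θ_p(x+ξ))`.
-/

/-- Hidden states of a fully-connected network: `hiddenState dims w b f i x` is `h_i(x)`,
with `h_0(x) = x` and `h_{i+1}(x) = f ∘ (w_{i+1} h_i(x) + b_{i+1})` (the paper's `w_{i+1}`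
is `w i` here, i.e. the paper's 1-indexed `w_i` is the 0-indexed `w (i-1)`). -/
def hiddenState (dims : ℕ → ℕ)
    (w : (i : ℕ) → Matrix (Fin (dims (i + 1))) (Fin (dims i)) ℝ)
    (b : (i : ℕ) → Fin (dims (i + 1)) → ℝ) (f : ℝ → ℝ) :
    (i : ℕ) → (Fin (dims 0) → ℝ) → (Fin (dims i) → ℝ)
  | 0, x => x
  | i + 1, x => fun j => f ((w i).mulVec (hiddenState dims w b f i x) j + b i j)

/-- `absChain dims w ξ i = |w_i|·|w_{i-1}|⋯|w_1|·|ξ|` (entrywise absolute values),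
a vector of size `dims i`; the base case is `|ξ|`. -/
def absChain (dims : ℕ → ℕ)
    (w : (i : ℕ) → Matrix (Fin (dims (i + 1))) (Fin (dims i)) ℝ)
    (ξ : Fin (dims 0) → ℝ) :
    (i : ℕ) → (Fin (dims i) → ℝ)
  | 0 => fun j => |ξ j|
  | i + 1 => ((w i).map (fun a => |a|)).mulVec (absChain dims w ξ i)

open Real Finset

lemma abs_mulVec_sub_mulVec_le {m n : Type*} [Fintype n] (w : Matrix m n ℝ)
    {v v' u : n → ℝ} (h : ∀ l, |v l - v' l| ≤ u l) (k : m) :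
    |w.mulVec v k - w.mulVec v' k| ≤ (w.map (fun a => |a|)).mulVec u k := by
  rw [← Pi.sub_apply, ← Matrix.mulVec_sub]
  calc |∑ l, w k l * (v - v') l| ≤ ∑ l, |w k l * (v - v') l| := abs_sum_le_sum_abs _ _
    _ ≤ ∑ l, |w k l| * u l := by
        gcongr with l
        rw [abs_mul]
        exact mul_le_mul_of_nonneg_left (h l) (abs_nonneg _)

lemma abs_hiddenState_sub_le (dims : ℕ → ℕ)
    (w : (i : ℕ) → Matrix (Fin (dims (i + 1))) (Fin (dims i)) ℝ)
    (b : (i : ℕ) → Fin (dims (i + 1)) → ℝ) {f : ℝ → ℝ} {C : ℝ} (hC : 0 ≤ C)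
    (hf : ∀ s t : ℝ, |f s - f t| ≤ C * |s - t|) (x ξ : Fin (dims 0) → ℝ) :
    ∀ i j, |hiddenState dims w b f i x j - hiddenState dims w b f i (x + ξ) j|
      ≤ C ^ i * absChain dims w ξ i j
  | 0, j => by simp [hiddenState, absChain]
  | i + 1, j => by
    have hprev : ∀ l, |hiddenState dims w b f i x l - hiddenState dims w b f i (x + ξ) l|
        ≤ (C ^ i • absChain dims w ξ i) l :=
      abs_hiddenState_sub_le dims w b hC hf x ξ i
    calc |f ((w i).mulVec (hiddenState dims w b f i x) j + b i j)
          - f ((w i).mulVec (hiddenState dims w b f i (x + ξ)) j + b i j)|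
        ≤ C * |(w i).mulVec (hiddenState dims w b f i x) j
            - (w i).mulVec (hiddenState dims w b f i (x + ξ)) j| := by
          simpa only [add_sub_add_right_eq_sub] using hf (_ + b i j) (_ + b i j)
      _ ≤ C * ((w i).map (fun a => |a|)).mulVec (C ^ i • absChain dims w ξ i) j :=
          mul_le_mul_of_nonneg_left (abs_mulVec_sub_mulVec_le _ hprev j) hC
      _ = C ^ (i + 1) * absChain dims w ξ (i + 1) j := by
          rw [Matrix.mulVec_smul, pow_succ']
          simp only [absChain, Pi.smul_apply, smul_eq_mul, mul_assoc]

lemma exp_mem_Icc_of_abs_sub_le {s t η : ℝ} (h : |s - t| ≤ η) :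
    exp s ∈ Set.Icc (exp (-η) * exp t) (exp η * exp t) := by
  rw [← exp_add, ← exp_add]
  obtain ⟨hlo, hhi⟩ := abs_le.mp h
  exact ⟨exp_le_exp.mpr (by linarith), exp_le_exp.mpr (by linarith)⟩

lemma sum_exp_mem_Icc_of_abs_sub_le {ι : Type*} [Fintype ι] {θ θ' : ι → ℝ} {η : ℝ}
    (h : ∀ p, |θ p - θ' p| ≤ η) :
    ∑ p, exp (θ p) ∈
      Set.Icc (exp (-η) * ∑ p, exp (θ' p)) (exp η * ∑ p, exp (θ' p)) := by
  rw [mul_sum, mul_sum]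
  exact ⟨sum_le_sum fun p _ => (exp_mem_Icc_of_abs_sub_le (h p)).1,
    sum_le_sum fun p _ => (exp_mem_Icc_of_abs_sub_le (h p)).2⟩

lemma abs_exp_div_sum_exp_sub_le {ι : Type*} [Fintype ι] {θ θ' : ι → ℝ} {η : ℝ}
    (h : ∀ p, |θ p - θ' p| ≤ η) (k : ι) :
    |exp (θ k) / ∑ p, exp (θ p) - exp (θ' k) / ∑ p, exp (θ' p)|
      ≤ exp (θ k) * (exp η - exp (-η)) / ∑ p, exp (θ' p) := by
  set a := exp (θ k)
  set S := ∑ p, exp (θ p)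
  set T := ∑ p, exp (θ' p)
  have hS : 0 < S := sum_pos (fun p _ => exp_pos _) ⟨k, mem_univ k⟩
  have hT : 0 < T := sum_pos (fun p _ => exp_pos _) ⟨k, mem_univ k⟩
  have hswap : ∀ p, |θ' p - θ p| ≤ η := fun p => abs_sub_comm (θ p) (θ' p) ▸ h p
  have hTS := sum_exp_mem_Icc_of_abs_sub_le hswap
  have hk := exp_mem_Icc_of_abs_sub_le (hswap k)
  have ha := exp_pos (θ k)
  have hlo : exp (-η) * a / T ≤ a / S := by
    rw [div_le_div_iff₀ hT hS]
    nlinarith [mul_le_mul_of_nonneg_left hTS.1 ha.le]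
  have hhi : a / S ≤ exp η * a / T := by
    rw [div_le_div_iff₀ hS hT]
    nlinarith [mul_le_mul_of_nonneg_left hTS.2 ha.le]
  calc |a / S - exp (θ' k) / T| ≤ exp η * a / T - exp (-η) * a / T :=
        abs_sub_le_of_le_of_le hlo hhi (div_le_div_of_nonneg_right hk.1 hT.le)
          (div_le_div_of_nonneg_right hk.2 hT.le)
    _ = a * (exp η - exp (-η)) / T := by ring

theorem softmax_output_variation_bound_general (L : ℕ) (dims : ℕ → ℕ)
    (hK : 0 < dims (L - 1 + 1))
    (w : (i : ℕ) → Matrix (Fin (dims (i + 1))) (Fin (dims i)) ℝ)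
    (b : (i : ℕ) → Fin (dims (i + 1)) → ℝ)
    (f : ℝ → ℝ) (C : ℝ) (hC : 0 ≤ C)
    (hf : ∀ s t : ℝ, |f s - f t| ≤ C * |s - t|)
    (θ : (Fin (dims 0) → ℝ) → Fin (dims (L - 1 + 1)) → ℝ)
    (hθ : ∀ y k, θ y k =
      (w (L - 1)).mulVec (hiddenState dims w b f (L - 1) y) k + b (L - 1) k)
    (NN : (Fin (dims 0) → ℝ) → Fin (dims (L - 1 + 1)) → ℝ)
    (hNN : ∀ y k, NN y k = Real.exp (θ y k) / ∑ p, Real.exp (θ y p))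
    (x ξ : Fin (dims 0) → ℝ) (η : ℝ)
    (hη : η = C ^ (L - 1) * Finset.univ.sup'
        (Finset.univ_nonempty_iff.mpr (Fin.pos_iff_nonempty.mp hK))
        (fun k => absChain dims w ξ (L - 1 + 1) k)) :
    ∀ k : Fin (dims (L - 1 + 1)),
      |NN x k - NN (x + ξ) k| ≤
        Real.exp (θ x k) * (Real.exp η - Real.exp (-η)) /
          ∑ p, Real.exp (θ (x + ξ) p) := by
  have hlogits : ∀ k, |θ x k - θ (x + ξ) k| ≤ η := by
    intro k
    have hhidden : ∀ l, |hiddenState dims w b f (L - 1) x l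
        - hiddenState dims w b f (L - 1) (x + ξ) l|
          ≤ (C ^ (L - 1) • absChain dims w ξ (L - 1)) l :=
      abs_hiddenState_sub_le dims w b hC hf x ξ (L - 1)
    calc |θ x k - θ (x + ξ) k|
        ≤ C ^ (L - 1) * absChain dims w ξ (L - 1 + 1) k := by
          rw [hθ, hθ, add_sub_add_right_eq_sub]
          simpa only [absChain, Matrix.mulVec_smul, Pi.smul_apply, smul_eq_mul]
            using abs_mulVec_sub_mulVec_le _ hhidden k
      _ ≤ η := hη ▸ mul_le_mul_of_nonneg_left (le_sup' _ (mem_univ k)) (pow_nonneg hC _)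
  intro k
  rw [hNN, hNN]
  exact abs_exp_div_sum_exp_sub_le hlogits k

/-- For a `K`-way, `L`-layer fully-connected network (`L ≥ 2`,
`K = dims (L-1+1) = dims L ≥ 1`) with activation `f` Lipschitz with constant `C ≥ 0`,
logits `θ(x) = w_L h_{L-1}(x) + b_L`, softmax output
`NN(x)_k = exp(θ_k(x)) / ∑_p exp(θ_p(x))`, perturbation `ξ`, and
`η = C^{L-1} · max_k (|w_L|·|w_{L-1}|⋯|w_1|·|ξ|)_k`: for every `k`,
`|NN(x)_k − NN(x+ξ)_k| ≤ exp(θ_k(x))·(e^η − e^{−η}) / ∑_p exp(θ_p(x+ξ))`. -/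
theorem softmax_output_variation_bound (L : ℕ) (hL : 2 ≤ L) (dims : ℕ → ℕ)
    (hK : 0 < dims (L - 1 + 1))
    (w : (i : ℕ) → Matrix (Fin (dims (i + 1))) (Fin (dims i)) ℝ)
    (b : (i : ℕ) → Fin (dims (i + 1)) → ℝ)
    (f : ℝ → ℝ) (C : ℝ) (hC : 0 ≤ C)
    (hf : ∀ s t : ℝ, |f s - f t| ≤ C * |s - t|)
    (θ : (Fin (dims 0) → ℝ) → Fin (dims (L - 1 + 1)) → ℝ)
    (hθ : ∀ y k, θ y k =
      (w (L - 1)).mulVec (hiddenState dims w b f (L - 1) y) k + b (L - 1) k)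
    (NN : (Fin (dims 0) → ℝ) → Fin (dims (L - 1 + 1)) → ℝ)
    (hNN : ∀ y k, NN y k = Real.exp (θ y k) / ∑ p, Real.exp (θ y p))
    (x ξ : Fin (dims 0) → ℝ) (η : ℝ)
    (hη : η = C ^ (L - 1) * Finset.univ.sup'
        (Finset.univ_nonempty_iff.mpr (Fin.pos_iff_nonempty.mp hK))
        (fun k => absChain dims w ξ (L - 1 + 1) k)) :
    ∀ k : Fin (dims (L - 1 + 1)),
      |NN x k - NN (x + ξ) k| ≤
        Real.exp (θ x k) * (Real.exp η - Real.exp (-η)) /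
          ∑ p, Real.exp (θ (x + ξ) p) :=
  softmax_output_variation_bound_general L dims hK w b f C hC hf θ hθ NN hNN x ξ η hη
end

section
/- Let a, b ∈ ℝ^K and η ≥ 0 satisfy |a_p − b_p| ≤ η for every p ∈ {1,…,K}. Then for every k ∈ {1,…,K}, the softmax components satisfy | exp(a_k)/Σ_{p=1}^K exp(a_p) − exp(b_k)/Σ_{p=1}^K exp(b_p) | ≤ exp(a_k) · (e^η − e^{−η}) / Σ_{p=1}^K exp(b_p). -/
/-!
Write `Sₐ = ∑ₚ exp aₚ` and `S_b = ∑ₚ exp bₚ`. Then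
`exp aₖ / Sₐ - exp bₖ / S_b = (exp aₖ / S_b) * (S_b / Sₐ - exp (bₖ - aₖ))`,
and both `S_b / Sₐ` and `exp (bₖ - aₖ)` lie in `[e^{-η}, e^η]`, so their difference is at most
`e^η - e^{-η}` in absolute value.
-/

open Real Set Finset

theorem Finset.sum_exp_le_exp_mul_sum_exp {ι : Type*} (s : Finset ι) {a b : ι → ℝ} {η : ℝ}
    (h : ∀ p ∈ s, b p ≤ a p + η) :
    ∑ p ∈ s, exp (b p) ≤ exp η * ∑ p ∈ s, exp (a p) := by
  rw [Finset.mul_sum]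
  refine Finset.sum_le_sum fun p hp => ?_
  rw [← exp_add, exp_le_exp]
  linarith [h p hp]

theorem Real.exp_sub_mem_Icc_of_abs_sub_le {x y η : ℝ} (h : |x - y| ≤ η) :
    exp (y - x) ∈ Icc (exp (-η)) (exp η) := by
  obtain ⟨hlo, hhi⟩ := abs_le.mp h
  exact ⟨exp_le_exp.mpr (by linarith), exp_le_exp.mpr (by linarith)⟩

theorem Real.sum_exp_div_sum_exp_mem_Icc {ι : Type*} [Fintype ι] [Nonempty ι] {a b : ι → ℝ}
    {η : ℝ} (h : ∀ p, |a p - b p| ≤ η) :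
    (∑ p, exp (b p)) / ∑ p, exp (a p) ∈ Icc (exp (-η)) (exp η) := by
  have hSa : 0 < ∑ p, exp (a p) := Finset.sum_pos (fun p _ => exp_pos _) univ_nonempty
  have hb_le : ∑ p, exp (b p) ≤ exp η * ∑ p, exp (a p) :=
    univ.sum_exp_le_exp_mul_sum_exp fun p _ => by linarith [(abs_le.mp (h p)).1]
  have ha_le : ∑ p, exp (a p) ≤ exp η * ∑ p, exp (b p) :=
    univ.sum_exp_le_exp_mul_sum_exp fun p _ => by linarith [(abs_le.mp (h p)).2]
  constructor
  · rw [le_div_iff₀ hSa, exp_neg, inv_mul_le_iff₀ (exp_pos η)]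
    exact ha_le
  · rwa [div_le_iff₀ hSa]

theorem softmax_component_diff_bound_general (K : ℕ) (a b : Fin K → ℝ)
    (η : ℝ) (h : ∀ p : Fin K, |a p - b p| ≤ η) :
    ∀ k : Fin K,
      |Real.exp (a k) / (∑ p, Real.exp (a p)) - Real.exp (b k) / (∑ p, Real.exp (b p))| ≤
        Real.exp (a k) * (Real.exp η - Real.exp (-η)) / (∑ p, Real.exp (b p)) := by
  intro k
  have : Nonempty (Fin K) := ⟨k⟩
  set Sa := ∑ p, exp (a p)
  set Sb := ∑ p, exp (b p)
  have hSa : 0 < Sa := Finset.sum_pos (fun p _ => exp_pos _) univ_nonempty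
  have hSb : 0 < Sb := Finset.sum_pos (fun p _ => exp_pos _) univ_nonempty
  have factor :
      exp (a k) / Sa - exp (b k) / Sb = exp (a k) / Sb * (Sb / Sa - exp (b k - a k)) := by
    rw [exp_sub]
    field_simp
  have hdiff : |Sb / Sa - exp (b k - a k)| ≤ exp η - exp (-η) := by
    simpa only [Real.dist_eq] using Real.dist_le_of_mem_Icc (sum_exp_div_sum_exp_mem_Icc h)
      (exp_sub_mem_Icc_of_abs_sub_le (h k))
  calc |exp (a k) / Sa - exp (b k) / Sb|
      = exp (a k) / Sb * |Sb / Sa - exp (b k - a k)| := by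
        rw [factor, abs_mul, abs_of_pos (by positivity)]
    _ ≤ exp (a k) / Sb * (exp η - exp (-η)) := by gcongr
    _ = exp (a k) * (exp η - exp (-η)) / Sb := by ring

/-- If `a b : ℝᴷ` (K ≥ 1) and `η ≥ 0` satisfy `|aₚ − bₚ| ≤ η` for all `p`,
then for every `k`,
`|exp(aₖ)/∑ₚ exp(aₚ) − exp(bₖ)/∑ₚ exp(bₚ)| ≤ exp(aₖ)·(e^η − e^(−η)) / ∑ₚ exp(bₚ)`. -/
theorem softmax_component_diff_bound (K : ℕ) (hK : 1 ≤ K) (a b : Fin K → ℝ)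
    (η : ℝ) (hη : 0 ≤ η) (h : ∀ p : Fin K, |a p - b p| ≤ η) :
    ∀ k : Fin K,
      |Real.exp (a k) / (∑ p, Real.exp (a p)) - Real.exp (b k) / (∑ p, Real.exp (b p))| ≤
        Real.exp (a k) * (Real.exp η - Real.exp (-η)) / (∑ p, Real.exp (b p)) :=
  softmax_component_diff_bound_general K a b η h
end
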